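/- For every n-simplex σ (n ≥ 1) in a Euclidean space there exists a vertex v_i such that h(v_i, σ) ≤ R(σ)/n, where h(v_i, σ) is the signed distance from the circumcenter c(σ) to the hyperplane affineSpan(F_i) of the facet opposite v_i, taken positive when c(σ) and v_i lie on the same side of that hyperplane. -/

import Mathlib

open EuclideanGeometry RealInnerProductSpace

variable {E : Type*} [NormedAddCommGroup E] [InnerProductSpace ℝ E] [FiniteDimensional ℝ E]

/-- The facet of an `(n+1)`-simplex opposite vertex `i`. -/
noncomputable def Affine.Simplex.facetOpp {n : ℕ} (σ : Affine.Simplex ℝ E (n + 1))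
    (i : Fin (n + 2)) : Affine.Simplex ℝ E n :=
  σ.face (fs := {i}ᶜ)
    (by rw [Finset.card_compl, Finset.card_singleton, Fintype.card_fin]; rfl)

/-- A simplex is well-centered if its circumcenter is a positive affine
combination of its vertices, i.e. lies in the interior of the simplex. -/
def Affine.Simplex.WellCentered {n : ℕ} (σ : Affine.Simplex ℝ E n) : Prop :=
  ∃ w : Fin (n + 1) → ℝ, (∀ j, 0 < w j) ∧ (∑ j, w j = 1) ∧
    σ.circumcenter = Finset.univ.affineCombination ℝ σ.points w

/-- The signed distance from the circumcenter of `σ` to the hyperplane spanned by the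
facet opposite vertex `i`, positive when the circumcenter is on the same side as vertex `i`. -/
noncomputable def Affine.Simplex.signedDist {n : ℕ} (σ : Affine.Simplex ℝ E (n + 1))
    (i : Fin (n + 2)) : ℝ :=
  ⟪σ.circumcenter - ((σ.facetOpp i).circumcenter : E),
      σ.points i - (((σ.facetOpp i).orthogonalProjectionSpan (σ.points i) : E))⟫ /
    ‖σ.points i - (((σ.facetOpp i).orthogonalProjectionSpan (σ.points i) : E))‖

/-
Write the circumcenter as `c = ∑ wⱼ vⱼ` with `∑ wⱼ = 1` and pick `i` with `(n + 2) wᵢ ≤ 1`.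
The signed distance to the hyperplane of the facet opposite `vᵢ` is an affine function that
vanishes on that hyperplane and equals the height `dᵢ` at `vᵢ`, so its value at `c` is `wᵢ dᵢ`;
being `1`-Lipschitz it also gives `dᵢ - wᵢ dᵢ ≤ |vᵢ c| = R`. Hence
`(n + 1) wᵢ dᵢ ≤ (1 - wᵢ) dᵢ ≤ R`.
-/

lemma exists_card_mul_le_one_of_sum_eq_one {ι : Type*} [Fintype ι] [Nonempty ι] {w : ι → ℝ}
    (hw : ∑ i, w i = 1) : ∃ i, Fintype.card ι * w i ≤ 1 := by
  have hsum : ∑ i, Fintype.card ι * w i = ∑ _i : ι, (1 : ℝ) := by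
    simp [← Finset.mul_sum, hw]
  obtain ⟨i, -, hi⟩ := Finset.exists_le_of_sum_le Finset.univ_nonempty hsum.le
  exact ⟨i, hi⟩

namespace Affine.Simplex

variable {V : Type*} [NormedAddCommGroup V] [InnerProductSpace ℝ V]

section SignedInfDist

variable {P : Type*} [MetricSpace P] [NormedAddTorsor V P] {n : ℕ} [NeZero n]
  (s : Simplex ℝ P n) (i : Fin (n + 1))

lemma signedInfDist_sub_signedInfDist_le_dist (x y : P) :
    s.signedInfDist i x - s.signedInfDist i y ≤ dist x y := by
  rw [signedInfDist, AffineSubspace.signedInfDist_def, signedDist_triangle_left, dist_comm]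
  exact signedDist_le_dist _ _ _

theorem exists_signedInfDist_le_div {p : P} (hp : p ∈ affineSpan ℝ (Set.range s.points)) {r : ℝ}
    (hr : ∀ i, dist (s.points i) p ≤ r) : ∃ i, s.signedInfDist i p ≤ r / n := by
  obtain ⟨w, hw, rfl⟩ := eq_affineCombination_of_mem_affineSpan_of_fintype hp
  obtain ⟨i, hi⟩ := exists_card_mul_le_one_of_sum_eq_one hw
  rw [Fintype.card_fin, Nat.cast_add, Nat.cast_one] at hi
  refine ⟨i, ?_⟩
  set c := Finset.univ.affineCombination ℝ s.points w
  set d := ‖s.points i -ᵥ (s.faceOpposite i).orthogonalProjectionSpan (s.points i)‖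
  have hc : s.signedInfDist i c = w i * d := s.signedInfDist_affineCombination i hw
  have hv : s.signedInfDist i (s.points i) = d := s.signedInfDist_apply_self i
  have hd : d - w i * d ≤ r := by
    rw [← hc, ← hv]
    exact (s.signedInfDist_sub_signedInfDist_le_dist i _ c).trans (hr i)
  rw [hc, le_div_iff₀ (by simpa using NeZero.pos n)]
  calc w i * d * n = n * w i * d := by ring
    _ ≤ (1 - w i) * d := by gcongr; linarith
    _ ≤ r := by linarith

end SignedInfDist

variable {n : ℕ} (σ : Simplex ℝ V (n + 1)) (i : Fin (n + 2))

lemma range_facetOpp_points : Set.range (σ.facetOpp i).points = σ.points '' {i}ᶜ := by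
  simp [facetOpp, range_face_points]

lemma signedDist_eq_signedInfDist_circumcenter :
    σ.signedDist i = σ.signedInfDist i σ.circumcenter := by
  have hc : ((σ.facetOpp i).circumcenter : V) ∈ affineSpan ℝ (σ.points '' {i}ᶜ) := by
    rw [← range_facetOpp_points]
    exact (σ.facetOpp i).circumcenter_mem_affineSpan
  have hproj : ((σ.facetOpp i).orthogonalProjectionSpan (σ.points i) : V) =
      orthogonalProjection (affineSpan ℝ (σ.points '' {i}ᶜ)) (σ.points i) :=
    orthogonalProjection_congr (by rw [range_facetOpp_points]) rfl
  rw [signedInfDist, AffineSubspace.signedInfDist_eq_signedDist_of_mem hc, signedDist_apply_apply,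
    signedDist, NormedSpace.normalize, real_inner_smul_left, hproj, real_inner_comm,
    div_eq_inv_mul, vsub_eq_sub, vsub_eq_sub]

end Affine.Simplex

/-- For every `(n+1)`-simplex there is a vertex whose signed distance
from the circumcenter to the opposite facet hyperplane is at most `R/(n+1)`. -/
theorem exists_signedDist_le_circumradius_div {n : ℕ}
    (σ : Affine.Simplex ℝ E (n + 1)) :
    ∃ i : Fin (n + 2), σ.signedDist i ≤ σ.circumradius / (n + 1) := by
  obtain ⟨i, hi⟩ := σ.exists_signedInfDist_le_div σ.circumcenter_mem_affineSpan
    fun j ↦ (σ.dist_circumcenter_eq_circumradius j).le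
  refine ⟨i, ?_⟩
  rw [σ.signedDist_eq_signedInfDist_circumcenter]
  exact_mod_cast hi
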